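/- Let σ_star(p) = ρ_{A₁B}(p) ⊗ ρ_{A₂C}(p) be the 3-partite pair-entangled-network state on the star graph in which party A holds two qubits A₁ and A₂, A₁ is paired with party B's qubit in a 2-dimensional isotropic state of visibility p, and A₂ is paired with party C's qubit in a 2-dimensional isotropic state of visibility p. If p > 1/√3, then σ_star(p) is genuinely multipartite entangled (i.e., not biseparable) with respect to the tripartition A|B|C. -/

import Mathlib

open scoped BigOperators

noncomputable section

/-- Projector onto the `d`-dimensional maximally entangled state
`|φ⁺_d⟩ = (1/√d) ∑ᵢ |ii⟩`, as a matrix on `ℂ^d ⊗ ℂ^d`. -/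
def phiPlus (d : ℕ) : Matrix (Fin d × Fin d) (Fin d × Fin d) ℂ :=
  fun x y => if x.1 = x.2 ∧ y.1 = y.2 then (1 / (d : ℂ)) else 0

/-- The `d`-dimensional isotropic state with visibility `p`:
`ρ(p) = p φ⁺_d + (1-p) 𝟙/d²`. -/
def iso (d : ℕ) (p : ℝ) : Matrix (Fin d × Fin d) (Fin d × Fin d) ℂ :=
  (p : ℂ) • phiPlus d +
    (((1 - p) / (d : ℝ) ^ 2 : ℝ) : ℂ) • (1 : Matrix (Fin d × Fin d) (Fin d × Fin d) ℂ)

/-- The (possibly unnormalized) projector `|ψ⟩⟨ψ|` onto a vector `ψ`. -/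
def vecProj {ι : Type} (ψ : ι → ℂ) : Matrix ι ι ℂ :=
  fun i j => ψ i * (starRingEnd ℂ) (ψ j)

/-- A pure tripartite vector factors across the bipartition `A|BC`. -/
def factorsA {α β γ : Type} (ψ : α × β × γ → ℂ) : Prop :=
  ∃ (f : α → ℂ) (g : β × γ → ℂ), ∀ a b c, ψ (a, b, c) = f a * g (b, c)

/-- A pure tripartite vector factors across the bipartition `B|AC`. -/
def factorsB {α β γ : Type} (ψ : α × β × γ → ℂ) : Prop :=
  ∃ (f : β → ℂ) (g : α × γ → ℂ), ∀ a b c, ψ (a, b, c) = f b * g (a, c)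

/-- A pure tripartite vector factors across the bipartition `C|AB`. -/
def factorsC {α β γ : Type} (ψ : α × β × γ → ℂ) : Prop :=
  ∃ (f : γ → ℂ) (g : α × β → ℂ), ∀ a b c, ψ (a, b, c) = f c * g (a, b)

/-- A tripartite density matrix (parties `A`, `B`, `C`) is biseparable if it is a finite
convex combination of projectors onto normalized pure states, each of which factors
across one of the three bipartitions `A|BC`, `B|AC`, `C|AB`. -/
def Bisep3 {α β γ : Type} [Fintype α] [Fintype β] [Fintype γ]
    (ρ : Matrix (α × β × γ) (α × β × γ) ℂ) : Prop :=
  ∃ (k : ℕ) (w : Fin k → ℝ) (ψ : Fin k → α × β × γ → ℂ),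
    (∀ t, 0 ≤ w t) ∧ (∑ t, w t = 1) ∧
    (∀ t, factorsA (ψ t) ∨ factorsB (ψ t) ∨ factorsC (ψ t)) ∧
    (∀ t, ∑ x, Complex.normSq (ψ t x) = 1) ∧
    ρ = ∑ t, (w t : ℂ) • vecProj (ψ t)

/-- The 3-partite star PEN state `σ_star(p) = ρ_{A₁B}(p) ⊗ ρ_{A₂C}(p)`.
Party `A` holds the pair `(a₁, a₂)`, party `B` holds `b`, party `C` holds `c`;
the global index is `((a₁, a₂), b, c)`. -/
def sigmaStar (d : ℕ) (p : ℝ) :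
    Matrix ((Fin d × Fin d) × Fin d × Fin d) ((Fin d × Fin d) × Fin d × Fin d) ℂ :=
  fun x y =>
    iso d p (x.1.1, x.2.1) (y.1.1, y.2.1) * iso d p (x.1.2, x.2.2) (y.1.2, y.2.2)

/-!
The operator `W = ¼ (φ⁺ ⊗ 𝟙 + 𝟙 ⊗ φ⁺) + ⅛ 𝟙 - φ⁺ ⊗ φ⁺` on `(A₁B) ⊗ (A₂C)` is a witness of genuine
tripartite entanglement. For a pure state that is a product across `A|BC`, Cauchy–Schwarz bounds
its overlap with `φ⁺ ⊗ φ⁺` by the largest Schmidt coefficient `1/4` of `φ⁺ ⊗ φ⁺` across that cut.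
For a product across `B|AC`, the overlap with `φ⁺ ⊗ φ⁺` is at most half the overlap with `𝟙 ⊗ φ⁺`,
and the overlap with `φ⁺ ⊗ 𝟙` is at most `1/2`; the cut `C|AB` follows by the symmetry
`A₁B ↔ A₂C`. Together with `⟨φ⁺ ⊗ φ⁺⟩ ≤ ⟨φ⁺ ⊗ 𝟙⟩, ⟨𝟙 ⊗ φ⁺⟩` this gives `⟨W⟩ ≥ 0` on every
biseparable state. On the product state `σ_star(p)` the expectations factor through
`tr (φ⁺ ρ(p)) = (1 + 3p)/4` and `tr (W σ_star(p)) = 3 (1 - 3p²) / 16 < 0`.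
-/

open Matrix

theorem Complex.normSq_sum_mul_le {ι : Type*} [Fintype ι] (f g : ι → ℂ) :
    Complex.normSq (∑ i, f i * g i) ≤
      (∑ i, Complex.normSq (f i)) * ∑ i, Complex.normSq (g i) := by
  have h := norm_inner_le_norm (𝕜 := ℂ) (WithLp.toLp 2 (star f) : EuclideanSpace ℂ ι)
    (WithLp.toLp 2 g)
  have hfg : inner ℂ (WithLp.toLp 2 (star f) : EuclideanSpace ℂ ι) (WithLp.toLp 2 g)
      = ∑ i, f i * g i := by
    simp [PiLp.inner_apply, mul_comm]
  rw [hfg] at h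
  have := pow_le_pow_left₀ (norm_nonneg _) h 2
  rw [mul_pow, EuclideanSpace.norm_sq_eq, EuclideanSpace.norm_sq_eq] at this
  simpa [← Complex.normSq_eq_norm_sq] using this

theorem Complex.normSq_sum_le_card_mul {ι : Type*} [Fintype ι] (f : ι → ℂ) :
    Complex.normSq (∑ i, f i) ≤ Fintype.card ι * ∑ i, Complex.normSq (f i) := by
  simpa [mul_comm] using Complex.normSq_sum_mul_le f 1

section StarNetwork

variable {α₁ α₂ β γ : Type*} [Fintype α₁] [Fintype α₂] [Fintype β] [Fintype γ]

def starVec (u : α₁ × β → ℂ) (v : α₂ × γ → ℂ) : (α₁ × α₂) × β × γ → ℂ :=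
  fun x => u (x.1.1, x.2.1) * v (x.1.2, x.2.2)

def starTensor (A : Matrix (α₁ × β) (α₁ × β) ℂ) (B : Matrix (α₂ × γ) (α₂ × γ) ℂ) :
    Matrix ((α₁ × α₂) × β × γ) ((α₁ × α₂) × β × γ) ℂ :=
  fun x y => A (x.1.1, x.2.1) (y.1.1, y.2.1) * B (x.1.2, x.2.2) (y.1.2, y.2.2)

theorem Fintype.sum_prodProdProdComm {M : Type*} [AddCommMonoid M]
    (F : (α₁ × α₂) × β × γ → M) :
    ∑ x, F x = ∑ a : α₁ × β, ∑ c : α₂ × γ, F ((a.1, c.1), a.2, c.2) := by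
  rw [← Fintype.sum_prod_type']
  exact Fintype.sum_equiv (Equiv.prodProdProdComm _ _ _ _) _ _ fun _ => rfl

theorem star_dotProduct_starTensor_mulVec_starVec (A : Matrix (α₁ × β) (α₁ × β) ℂ)
    (B : Matrix (α₂ × γ) (α₂ × γ) ℂ) (u : α₁ × β → ℂ) (v : α₂ × γ → ℂ) :
    star (starVec u v) ⬝ᵥ starTensor A B *ᵥ starVec u v =
      (star u ⬝ᵥ A *ᵥ u) * (star v ⬝ᵥ B *ᵥ v) := by
  simp only [dotProduct, mulVec, Fintype.sum_prodProdProdComm, starVec, starTensor,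
    Pi.star_apply, star_mul', Prod.mk.eta]
  rw [Finset.sum_mul_sum]
  refine Finset.sum_congr rfl fun a _ => Finset.sum_congr rfl fun c _ => ?_
  rw [mul_mul_mul_comm, Finset.sum_mul_sum]
  exact congrArg _ (Finset.sum_congr rfl fun a' _ => Finset.sum_congr rfl fun c' _ => by ring)

end StarNetwork

theorem sigmaStar_eq_starTensor (d : ℕ) (p : ℝ) :
    sigmaStar d p = starTensor (iso d p) (iso d p) := rfl

theorem star_dotProduct_mulVec_vecProj {ι : Type} [Fintype ι] (Φ ψ : ι → ℂ) :
    star Φ ⬝ᵥ vecProj ψ *ᵥ Φ = Complex.normSq (star Φ ⬝ᵥ ψ) := by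
  rw [← Complex.mul_conj]
  simp only [dotProduct, mulVec, vecProj, map_sum, Pi.star_apply, map_mul, Complex.star_def,
    Complex.conj_conj]
  rw [Finset.sum_mul_sum]
  simp only [Finset.mul_sum]
  refine Finset.sum_congr rfl fun i _ => Finset.sum_congr rfl fun j _ => by ring

theorem star_dotProduct_sum_smul_vecProj_mulVec {ι : Type} [Fintype ι] {k : ℕ} (w : Fin k → ℝ)
    (ψ : Fin k → ι → ℂ) (Φ : ι → ℂ) :
    star Φ ⬝ᵥ (∑ t, (w t : ℂ) • vecProj (ψ t)) *ᵥ Φ =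
      ((∑ t, w t * Complex.normSq (star Φ ⬝ᵥ ψ t) : ℝ) : ℂ) := by
  simp only [Matrix.sum_mulVec, Matrix.smul_mulVec, dotProduct_sum, dotProduct_smul,
    star_dotProduct_mulVec_vecProj]
  push_cast
  rfl

section Overlaps

variable {κ : Type} [Fintype κ] [DecidableEq κ]

def phiVec : κ × κ → ℂ := fun x => if x.1 = x.2 then 1 else 0

-- With `Φ = ∑ᵢ |ii⟩` (unnormalised, so `φ⁺ = |Φ⟩⟨Φ| / d`), these are `⟨ψ| ΦΦ† ⊗ ΦΦ† |ψ⟩`,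
-- `⟨ψ| ΦΦ† ⊗ 𝟙 |ψ⟩` and `⟨ψ| 𝟙 ⊗ ΦΦ† |ψ⟩` on the pairs `A₁B` and `A₂C`.
def overlapPhiPhi (ψ : (κ × κ) × κ × κ → ℂ) : ℝ :=
  Complex.normSq (∑ a, ψ (a, a))

def overlapPhiOne (ψ : (κ × κ) × κ × κ → ℂ) : ℝ :=
  ∑ m : κ × κ, Complex.normSq (∑ k, ψ ((k, m.1), k, m.2))

def overlapOnePhi (ψ : (κ × κ) × κ × κ → ℂ) : ℝ :=
  ∑ m : κ × κ, Complex.normSq (∑ k, ψ ((m.1, k), m.2, k))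

theorem star_starVec_phiVec_phiVec_dotProduct (ψ : (κ × κ) × κ × κ → ℂ) :
    star (starVec phiVec phiVec) ⬝ᵥ ψ = ∑ a, ψ (a, a) := by
  simp [dotProduct, starVec, phiVec, Fintype.sum_prod_type, apply_ite (starRingEnd ℂ), ite_mul]

theorem star_starVec_phiVec_single_dotProduct (ψ : (κ × κ) × κ × κ → ℂ) (m : κ × κ) :
    star (starVec phiVec (Pi.single m 1)) ⬝ᵥ ψ = ∑ k, ψ ((k, m.1), k, m.2) := by
  simp [dotProduct, starVec, phiVec, Fintype.sum_prod_type, Pi.single_apply, Prod.ext_iff,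
    apply_ite (starRingEnd ℂ), ite_mul, ite_and]

theorem star_starVec_single_phiVec_dotProduct (ψ : (κ × κ) × κ × κ → ℂ) (m : κ × κ) :
    star (starVec (Pi.single m 1) phiVec) ⬝ᵥ ψ = ∑ k, ψ ((m.1, k), m.2, k) := by
  simp [dotProduct, starVec, phiVec, Fintype.sum_prod_type, Pi.single_apply, Prod.ext_iff,
    apply_ite (starRingEnd ℂ), ite_mul, ite_and]

end Overlaps

theorem star_phiVec_dotProduct_iso_mulVec_phiVec (d : ℕ) [NeZero d] (p : ℝ) :
    star phiVec ⬝ᵥ iso d p *ᵥ phiVec = ((d * p + (1 - p) / d : ℝ) : ℂ) := by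
  simp [dotProduct, mulVec, iso, phiPlus, phiVec, Fintype.sum_prod_type, Matrix.one_apply,
    apply_ite (starRingEnd ℂ), ite_mul, Finset.sum_add_distrib, Finset.sum_ite_eq]
  field_simp

theorem trace_iso (d : ℕ) [NeZero d] (p : ℝ) : (iso d p).trace = 1 := by
  have hd : (d : ℂ) ≠ 0 := Nat.cast_ne_zero.mpr (NeZero.ne d)
  simp [Matrix.trace, iso, phiPlus, Fintype.sum_prod_type, Finset.sum_add_distrib,
    Finset.sum_ite_eq]
  field_simp
  ring

theorem star_single_dotProduct_mulVec_single {ι : Type*} [Fintype ι] [DecidableEq ι]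
    (B : Matrix ι ι ℂ) (m : ι) : star (Pi.single m 1 : ι → ℂ) ⬝ᵥ B *ᵥ Pi.single m 1 = B m m := by
  simp

theorem sum_mul_sum_normSq_dotProduct {ι μ : Type} [Fintype ι] [Fintype μ] {k : ℕ}
    (w : Fin k → ℝ) (ψ : Fin k → ι → ℂ) (Φ : μ → ι → ℂ) :
    ((∑ t, w t * ∑ m, Complex.normSq (star (Φ m) ⬝ᵥ ψ t) : ℝ) : ℂ) =
      ∑ m, star (Φ m) ⬝ᵥ (∑ t, (w t : ℂ) • vecProj (ψ t)) *ᵥ Φ m := by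
  simp only [star_dotProduct_sum_smul_vecProj_mulVec, Finset.mul_sum]
  push_cast
  exact Finset.sum_comm

section Mixture

variable {κ : Type} [Fintype κ] [DecidableEq κ] {k : ℕ} {w : Fin k → ℝ}
  {ψ : Fin k → (κ × κ) × κ × κ → ℂ} {A B : Matrix (κ × κ) (κ × κ) ℂ}

theorem sum_mul_overlapPhiPhi_of_starTensor_eq
    (h : starTensor A B = ∑ t, (w t : ℂ) • vecProj (ψ t)) :
    ((∑ t, w t * overlapPhiPhi (ψ t) : ℝ) : ℂ) =
      (star phiVec ⬝ᵥ A *ᵥ phiVec) * (star phiVec ⬝ᵥ B *ᵥ phiVec) := by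
  simp only [overlapPhiPhi, ← star_starVec_phiVec_phiVec_dotProduct,
    ← star_dotProduct_sum_smul_vecProj_mulVec, ← h, star_dotProduct_starTensor_mulVec_starVec]

theorem sum_mul_overlapPhiOne_of_starTensor_eq
    (h : starTensor A B = ∑ t, (w t : ℂ) • vecProj (ψ t)) :
    ((∑ t, w t * overlapPhiOne (ψ t) : ℝ) : ℂ) = (star phiVec ⬝ᵥ A *ᵥ phiVec) * B.trace := by
  simp only [overlapPhiOne, ← star_starVec_phiVec_single_dotProduct,
    sum_mul_sum_normSq_dotProduct, ← h, star_dotProduct_starTensor_mulVec_starVec,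
    star_single_dotProduct_mulVec_single, ← Finset.mul_sum, Matrix.trace, Matrix.diag]

theorem sum_mul_overlapOnePhi_of_starTensor_eq
    (h : starTensor A B = ∑ t, (w t : ℂ) • vecProj (ψ t)) :
    ((∑ t, w t * overlapOnePhi (ψ t) : ℝ) : ℂ) = A.trace * (star phiVec ⬝ᵥ B *ᵥ phiVec) := by
  simp only [overlapOnePhi, ← star_starVec_single_phiVec_dotProduct,
    sum_mul_sum_normSq_dotProduct, ← h, star_dotProduct_starTensor_mulVec_starVec,
    star_single_dotProduct_mulVec_single, ← Finset.sum_mul, Matrix.trace, Matrix.diag]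

end Mixture

theorem sum_normSq_of_factorsA {α β γ : Type} [Fintype α] [Fintype β] [Fintype γ]
    {ψ : α × β × γ → ℂ} {f : α → ℂ} {g : β × γ → ℂ} (h : ∀ a b c, ψ (a, b, c) = f a * g (b, c)) :
    ∑ x, Complex.normSq (ψ x) = (∑ a, Complex.normSq (f a)) * ∑ y, Complex.normSq (g y) := by
  rw [Fintype.sum_mul_sum, ← Fintype.sum_prod_type']
  exact Finset.sum_congr rfl fun x _ => by rw [← Complex.normSq_mul, ← h]

theorem sum_normSq_of_factorsB {α β γ : Type} [Fintype α] [Fintype β] [Fintype γ]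
    {ψ : α × β × γ → ℂ} {f : β → ℂ} {g : α × γ → ℂ} (h : ∀ a b c, ψ (a, b, c) = f b * g (a, c)) :
    ∑ x, Complex.normSq (ψ x) = (∑ b, Complex.normSq (f b)) * ∑ y, Complex.normSq (g y) := by
  rw [Finset.sum_mul, Fintype.sum_prod_type, Finset.sum_comm]
  simp only [Fintype.sum_prod_type, Finset.mul_sum, h, Complex.normSq_mul]
  exact Finset.sum_congr rfl fun _ _ => Finset.sum_comm

section Bounds

variable {κ : Type} [Fintype κ]

theorem overlapPhiPhi_le_card_mul_overlapPhiOne (ψ : (κ × κ) × κ × κ → ℂ) :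
    overlapPhiPhi ψ ≤ Fintype.card κ * overlapPhiOne ψ := by
  have hdiag : ∑ m, Complex.normSq (∑ k, ψ ((k, m), k, m)) ≤ overlapPhiOne ψ := by
    rw [overlapPhiOne, Fintype.sum_prod_type]
    exact Finset.sum_le_sum fun m _ => Finset.single_le_sum
      (f := fun n => Complex.normSq (∑ k, ψ ((k, m), k, n)))
      (fun _ _ => Complex.normSq_nonneg _) (Finset.mem_univ m)
  calc overlapPhiPhi ψ = Complex.normSq (∑ m, ∑ k, ψ ((k, m), k, m)) := by
        rw [overlapPhiPhi, Fintype.sum_prod_type, Finset.sum_comm]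
    _ ≤ Fintype.card κ * ∑ m, Complex.normSq (∑ k, ψ ((k, m), k, m)) :=
        Complex.normSq_sum_le_card_mul _
    _ ≤ Fintype.card κ * overlapPhiOne ψ := by gcongr

theorem overlapPhiPhi_le_one_of_factorsA {ψ : (κ × κ) × κ × κ → ℂ}
    (hψ : ∑ x, Complex.normSq (ψ x) = 1) (h : factorsA ψ) : overlapPhiPhi ψ ≤ 1 := by
  obtain ⟨f, g, hfg⟩ := h
  have hsum : ∑ a, ψ (a, a) = ∑ a, f a * g a := by simp only [hfg]
  rw [overlapPhiPhi, hsum, ← hψ, sum_normSq_of_factorsA hfg]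
  exact Complex.normSq_sum_mul_le f g

theorem overlapPhiPhi_le_overlapOnePhi_of_factorsB {ψ : (κ × κ) × κ × κ → ℂ}
    (h : factorsB ψ) : overlapPhiPhi ψ ≤ overlapOnePhi ψ := by
  obtain ⟨f, g, hfg⟩ := h
  set u : κ → ℂ := fun a₁ => ∑ a₂, g ((a₁, a₂), a₂)
  have hsum : ∑ a, ψ (a, a) = ∑ a₁, f a₁ * u a₁ := by
    simp only [Fintype.sum_prod_type, hfg, u, Finset.mul_sum]
  have hF : overlapOnePhi ψ = (∑ n, Complex.normSq (f n)) * ∑ m, Complex.normSq (u m) := by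
    simp only [overlapOnePhi, Fintype.sum_prod_type, hfg, ← Finset.mul_sum, Complex.normSq_mul]
    rw [Finset.sum_mul_sum, Finset.sum_comm]
  rw [overlapPhiPhi, hsum, hF]
  exact Complex.normSq_sum_mul_le f u

theorem overlapPhiOne_le_one_of_factorsB {ψ : (κ × κ) × κ × κ → ℂ}
    (hψ : ∑ x, Complex.normSq (ψ x) = 1) (h : factorsB ψ) : overlapPhiOne ψ ≤ 1 := by
  obtain ⟨f, g, hfg⟩ := h
  have hg : ∑ y, Complex.normSq (g y) = ∑ m : κ × κ, ∑ k, Complex.normSq (g ((k, m.1), m.2)) := by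
    simp only [Fintype.sum_prod_type]
    rw [Finset.sum_comm]
    exact Finset.sum_congr rfl fun _ _ => Finset.sum_comm
  rw [← hψ, sum_normSq_of_factorsB hfg, hg, Finset.mul_sum, overlapPhiOne]
  refine Finset.sum_le_sum fun m _ => ?_
  simp only [hfg]
  exact Complex.normSq_sum_mul_le f _

end Bounds

def swapStar {α₁ α₂ β γ : Type} (ψ : (α₁ × α₂) × β × γ → ℂ) : (α₂ × α₁) × γ × β → ℂ :=
  fun x => ψ ((x.1.2, x.1.1), x.2.2, x.2.1)

theorem factorsB_swapStar {α₁ α₂ β γ : Type} {ψ : (α₁ × α₂) × β × γ → ℂ} (h : factorsC ψ) :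
    factorsB (swapStar ψ) := by
  obtain ⟨f, g, hfg⟩ := h
  exact ⟨f, fun y => g ((y.1.2, y.1.1), y.2), fun _ _ _ => hfg _ _ _⟩

theorem sum_normSq_swapStar {α₁ α₂ β γ : Type} [Fintype α₁] [Fintype α₂] [Fintype β]
    [Fintype γ] (ψ : (α₁ × α₂) × β × γ → ℂ) :
    ∑ x, Complex.normSq (swapStar ψ x) = ∑ x, Complex.normSq (ψ x) :=
  Fintype.sum_equiv ((Equiv.prodComm _ _).prodCongr (Equiv.prodComm _ _)) _ _ fun _ => rfl

section Witness

variable {κ : Type} [Fintype κ]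

theorem overlapPhiPhi_swapStar (ψ : (κ × κ) × κ × κ → ℂ) :
    overlapPhiPhi (swapStar ψ) = overlapPhiPhi ψ := by
  rw [overlapPhiPhi, overlapPhiPhi]
  congr 1
  exact Fintype.sum_equiv (Equiv.prodComm κ κ) _ _ fun _ => rfl

theorem overlapPhiOne_swapStar (ψ : (κ × κ) × κ × κ → ℂ) :
    overlapPhiOne (swapStar ψ) = overlapOnePhi ψ := rfl

theorem overlapOnePhi_swapStar (ψ : (κ × κ) × κ × κ → ℂ) :
    overlapOnePhi (swapStar ψ) = overlapPhiOne ψ := rfl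

theorem overlapPhiPhi_le_two_mul_overlapPhiOne (hκ : Fintype.card κ ≤ 2)
    (ψ : (κ × κ) × κ × κ → ℂ) : overlapPhiPhi ψ ≤ 2 * overlapPhiOne ψ :=
  (overlapPhiPhi_le_card_mul_overlapPhiOne ψ).trans <|
    mul_le_mul_of_nonneg_right (by exact_mod_cast hκ)
      (Finset.sum_nonneg fun _ _ => Complex.normSq_nonneg _)

theorem two_mul_overlapPhiPhi_le_of_factorsA (hκ : Fintype.card κ ≤ 2)
    {ψ : (κ × κ) × κ × κ → ℂ} (hψ : ∑ x, Complex.normSq (ψ x) = 1) (h : factorsA ψ) :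
    2 * overlapPhiPhi ψ ≤ overlapPhiOne ψ + overlapOnePhi ψ + 1 := by
  have hAC := overlapPhiPhi_le_two_mul_overlapPhiOne hκ (swapStar ψ)
  rw [overlapPhiPhi_swapStar, overlapPhiOne_swapStar] at hAC
  linarith [overlapPhiPhi_le_one_of_factorsA hψ h, overlapPhiPhi_le_two_mul_overlapPhiOne hκ ψ]

theorem two_mul_overlapPhiPhi_le_of_factorsB (hκ : Fintype.card κ ≤ 2)
    {ψ : (κ × κ) × κ × κ → ℂ} (hψ : ∑ x, Complex.normSq (ψ x) = 1) (h : factorsB ψ) :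
    2 * overlapPhiPhi ψ ≤ overlapPhiOne ψ + overlapOnePhi ψ + 1 := by
  linarith [overlapPhiPhi_le_overlapOnePhi_of_factorsB h, overlapPhiOne_le_one_of_factorsB hψ h,
    overlapPhiPhi_le_two_mul_overlapPhiOne hκ ψ]

theorem two_mul_overlapPhiPhi_le (hκ : Fintype.card κ ≤ 2) {ψ : (κ × κ) × κ × κ → ℂ}
    (hψ : ∑ x, Complex.normSq (ψ x) = 1) (h : factorsA ψ ∨ factorsB ψ ∨ factorsC ψ) :
    2 * overlapPhiPhi ψ ≤ overlapPhiOne ψ + overlapOnePhi ψ + 1 := by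
  rcases h with hA | hB | hC
  · exact two_mul_overlapPhiPhi_le_of_factorsA hκ hψ hA
  · exact two_mul_overlapPhiPhi_le_of_factorsB hκ hψ hB
  · have := two_mul_overlapPhiPhi_le_of_factorsB hκ (by rwa [sum_normSq_swapStar])
      (factorsB_swapStar hC)
    rw [overlapPhiPhi_swapStar, overlapPhiOne_swapStar, overlapOnePhi_swapStar] at this
    linarith

end Witness

theorem two_mul_sum_overlapPhiPhi_le {κ : Type} [Fintype κ] (hκ : Fintype.card κ ≤ 2) {k : ℕ}
    {w : Fin k → ℝ} {ψ : Fin k → (κ × κ) × κ × κ → ℂ} (hw : ∀ t, 0 ≤ w t) (hw1 : ∑ t, w t = 1)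
    (hψ : ∀ t, ∑ x, Complex.normSq (ψ t x) = 1)
    (h : ∀ t, factorsA (ψ t) ∨ factorsB (ψ t) ∨ factorsC (ψ t)) :
    2 * ∑ t, w t * overlapPhiPhi (ψ t) ≤
      ∑ t, w t * overlapPhiOne (ψ t) + ∑ t, w t * overlapOnePhi (ψ t) + 1 := by
  calc 2 * ∑ t, w t * overlapPhiPhi (ψ t) = ∑ t, w t * (2 * overlapPhiPhi (ψ t)) := by
        rw [Finset.mul_sum]
        exact Finset.sum_congr rfl fun _ _ => mul_left_comm _ _ _
    _ ≤ ∑ t, w t * (overlapPhiOne (ψ t) + overlapOnePhi (ψ t) + 1) :=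
        Finset.sum_le_sum fun t _ =>
          mul_le_mul_of_nonneg_left (two_mul_overlapPhiPhi_le hκ (hψ t) (h t)) (hw t)
    _ = _ := by simp only [mul_add, mul_one, Finset.sum_add_distrib, hw1]

theorem sigmaStar_GME (p : ℝ) (hp : 1 / Real.sqrt 3 < p) :
    ¬ Bisep3 (sigmaStar 2 p) := by
  rintro ⟨k, w, ψ, hw, hw1, hfac, hnorm, hσ⟩
  rw [sigmaStar_eq_starTensor] at hσ
  have hval : star phiVec ⬝ᵥ iso 2 p *ᵥ phiVec = (((1 + 3 * p) / 2 : ℝ) : ℂ) := by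
    rw [star_phiVec_dotProduct_iso_mulVec_phiVec]
    congr 1
    ring
  have hG := sum_mul_overlapPhiPhi_of_starTensor_eq hσ
  have hAB := sum_mul_overlapPhiOne_of_starTensor_eq hσ
  have hAC := sum_mul_overlapOnePhi_of_starTensor_eq hσ
  simp only [hval, trace_iso, mul_one, one_mul, ← Complex.ofReal_mul, Complex.ofReal_inj]
    at hG hAB hAC
  have hW := two_mul_sum_overlapPhiPhi_le (by simp) hw hw1 hnorm hfac
  rw [hG, hAB, hAC] at hW
  have hp2 : 1 / 3 < p ^ 2 := by
    have := pow_lt_pow_left₀ hp (by positivity) two_ne_zero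
    rwa [div_pow, Real.sq_sqrt zero_le_three, one_pow] at this
  nlinarith
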